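/- Let f : ℝ^n → ℝ be continuous and μ-strongly convex with μ > 0, let A ∈ ℝ^{p×n}, and suppose the problem min_{Ax=0} f(x) is feasible. Then: (i) min_{Ax=0} f(x) has a unique solution x* with value f*; (ii) the dual function φ(y) = max_x {⟨A^T y, x⟩ − f(x)} attains its minimum over ℝ^p at some y*; (iii) there is no duality gap: min_{y ∈ ℝ^p} φ(y) = −f*; and (iv) x* = x*(A^T y*), where x*(A^T y*) is the unique maximizer defining φ(y*). -/

import Mathlib

/-!
The constrained minimizer `x*` exists because a continuous strongly convex function is coercive.
Separating the open strict epigraph of `f - f x*` from `ker A × {0}` by Hahn–Banach yields a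
subgradient `g` of `f` at `x*` orthogonal to `ker A`, i.e. `g = Aᵀ y*`. Then `x*` maximizes
`⟪Aᵀ y*, x⟫ - f x`, so `φ(y*) = -f x*`, while weak duality
`φ(y) ≥ ⟪Aᵀ y, x*⟫ - f x* = -f x*` shows that `y*` minimizes `φ`.
-/

open RealInnerProductSpace Matrix Set Filter

lemma LinearMap.eq_zero_of_forall_le_of_mem {F : Type*} [AddCommGroup F] [Module ℝ F]
    (L : F →ₗ[ℝ] ℝ) {K : Submodule ℝ F} {c : ℝ}
    (hL : ∀ z ∈ K, c ≤ L z) {z : F} (hz : z ∈ K) : L z = 0 := by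
  by_contra hne
  have := hL (((c - 1) / L z) • z) (K.smul_mem _ hz)
  rw [map_smul, smul_eq_mul, div_mul_cancel₀ _ hne] at this
  linarith

section Separation

variable {F : Type*} [AddCommGroup F] [Module ℝ F] [TopologicalSpace F]
  [IsTopologicalAddGroup F] [ContinuousSMul ℝ F]

theorem ConvexOn.exists_strongDual_le_of_isMinOn {f : F → ℝ} (hf : ConvexOn ℝ univ f)
    (hcont : Continuous f) {K : Submodule ℝ F} {x₀ : F} (hx₀ : x₀ ∈ K)
    (hmin : IsMinOn f K x₀) :
    ∃ ℓ : StrongDual ℝ F, (∀ z ∈ K, ℓ z = 0) ∧ ∀ x, f x₀ + ℓ x ≤ f x := by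
  set C : Set (F × ℝ) := {p | p.1 ∈ univ ∧ f p.1 + -f x₀ < p.2}
  have hCconv : Convex ℝ C := (hf.add_const (-f x₀)).convex_strict_epigraph
  have hCopen : IsOpen C := by
    simp only [C, mem_univ, true_and]
    exact isOpen_lt ((hcont.comp continuous_fst).add continuous_const) continuous_snd
  have hdisj : Disjoint C (K.prod ⊥ : Submodule ℝ (F × ℝ)) := by
    rw [Set.disjoint_left]
    rintro ⟨x, t⟩ ⟨-, hlt⟩ ⟨hxK, ht : t = 0⟩
    have : f x₀ ≤ f x := hmin hxK
    dsimp only at hlt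
    linarith
  obtain ⟨L, c, hLC, hLD⟩ := geometric_hahn_banach_open hCconv hCopen (K.prod ⊥).convex hdisj
  have hL0 : ∀ z ∈ K, L (z, 0) = 0 := fun z hz =>
    (L : F × ℝ →ₗ[ℝ] ℝ).eq_zero_of_forall_le_of_mem hLD (z := (z, 0)) ⟨hz, rfl⟩
  have hc : c ≤ 0 := by simpa using hLD 0 (K.prod ⊥).zero_mem
  have hsplit : ∀ x t, L (x, t) = L (x, 0) + t * L (0, 1) := by
    intro x t
    rw [← smul_eq_mul, ← L.map_smul, ← map_add]
    simp
  have hβ : L (0, 1) < 0 := by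
    have := hLC (x₀, 1) ⟨trivial, by simp⟩
    rw [hsplit, hL0 x₀ hx₀] at this
    linarith
  have hslope : ∀ x, L (x, 0) / -L (0, 1) ≤ f x - f x₀ := fun x =>
    le_of_forall_gt_imp_ge_of_dense fun t ht => by
      have := hLC (x, t) ⟨trivial, by linarith⟩
      rw [hsplit] at this
      rw [div_le_iff₀ (by linarith)]
      nlinarith
  refine ⟨(-L (0, 1))⁻¹ • L.comp (ContinuousLinearMap.inl ℝ F ℝ),
    fun z hz => by simp [hL0 z hz], fun x => ?_⟩
  have := hslope x
  simp only [FunLike.coe_smul, ContinuousLinearMap.coe_comp, Pi.smul_apply,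
    Function.comp_apply, ContinuousLinearMap.inl_apply, smul_eq_mul]
  rw [inv_mul_eq_div]
  linarith

end Separation

section InnerProduct

variable {E : Type*} [NormedAddCommGroup E] [InnerProductSpace ℝ E] {f : E → ℝ} {m : ℝ}

theorem ConvexOn.exists_mem_orthogonal_subgradient [CompleteSpace E] (hf : ConvexOn ℝ univ f)
    (hcont : Continuous f) {K : Submodule ℝ E} {x₀ : E} (hx₀ : x₀ ∈ K)
    (hmin : IsMinOn f K x₀) :
    ∃ g ∈ Kᗮ, ∀ x, f x₀ + ⟪g, x⟫ ≤ f x := by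
  obtain ⟨ℓ, hℓK, hℓ⟩ := hf.exists_strongDual_le_of_isMinOn hcont hx₀ hmin
  refine ⟨(InnerProductSpace.toDual ℝ E).symm ℓ, fun z hz => ?_, fun x => ?_⟩
  · rw [real_inner_comm, InnerProductSpace.toDual_symm_apply]
    exact hℓK z hz
  · simpa only [InnerProductSpace.toDual_symm_apply] using hℓ x

lemma StrongConvexOn.sub_inner {s : Set E} (hf : StrongConvexOn s m f) (v : E) :
    StrongConvexOn s m fun x => f x - ⟪v, x⟫ := by
  rw [strongConvexOn_iff_convex] at hf ⊢
  refine (hf.sub ((innerₛₗ ℝ v).concaveOn hf.1)).congr fun x _ => ?_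
  simp only [Pi.sub_apply, innerₛₗ_apply_apply]
  ring

theorem StrongConvexOn.tendsto_cocompact [ProperSpace E] (hf : StrongConvexOn univ m f)
    (hm : 0 < m) (hcont : Continuous f) : Tendsto f (cocompact E) atTop := by
  obtain ⟨g, -, hg⟩ := (strongConvexOn_iff_convex.1 hf).exists_mem_orthogonal_subgradient
    (hcont.sub (continuous_const.mul (continuous_norm.pow 2))) (K := ⊥) (Submodule.zero_mem _)
    (fun x hx => by simp_all)
  have hbound : ∀ x, f 0 - ‖g‖ * ‖x‖ + m / 2 * ‖x‖ ^ 2 ≤ f x := fun x => by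
    have := hg x
    have := neg_le_of_abs_le (abs_real_inner_le_norm g x)
    simp only [norm_zero] at *
    linarith
  have hquad : Tendsto (fun t : ℝ => f 0 - ‖g‖ * t + m / 2 * t ^ 2) atTop atTop := by
    have hlin : Tendsto (fun t : ℝ => m / 2 * t - ‖g‖) atTop atTop :=
      tendsto_atTop_add_const_right _ _ (tendsto_id.const_mul_atTop (by positivity))
    refine (tendsto_atTop_add_const_left _ (f 0) (tendsto_id.atTop_mul_atTop₀ hlin)).congr
      fun t => ?_
    simp only [id]
    ring
  exact tendsto_atTop_mono hbound (hquad.comp tendsto_norm_cocompact_atTop)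

theorem StrongConvexOn.exists_isMinOn [ProperSpace E] (hf : StrongConvexOn univ m f)
    (hm : 0 < m) (hcont : Continuous f) {s : Set E} (hs : IsClosed s) (hne : s.Nonempty) :
    ∃ x ∈ s, IsMinOn f s x := by
  obtain ⟨x₀, hx₀⟩ := hne
  exact hcont.continuousOn.exists_isMinOn' hs hx₀
    (((hf.tendsto_cocompact hm hcont).eventually (eventually_ge_atTop (f x₀))).filter_mono
      inf_le_left)

theorem StrongConvexOn.exists_isMaxOn_inner_sub [ProperSpace E] (hf : StrongConvexOn univ m f)
    (hm : 0 < m) (hcont : Continuous f) (v : E) :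
    ∃ x, IsMaxOn (fun x => ⟪v, x⟫ - f x) univ x := by
  obtain ⟨x, -, hx⟩ := (hf.sub_inner v).exists_isMinOn hm
    (hcont.sub (continuous_const.inner continuous_id)) isClosed_univ univ_nonempty
  exact ⟨x, by simpa only [neg_sub] using hx.neg⟩

end InnerProduct

theorem strong_duality_strongly_convex_general
    {n p : ℕ} (f : EuclideanSpace ℝ (Fin n) → ℝ) (μ : ℝ) (hμ : 0 < μ)
    (hcont : Continuous f) (hsc : StrongConvexOn Set.univ μ f)
    (A : Matrix (Fin p) (Fin n) ℝ) :
    ∃ (xopt : EuclideanSpace ℝ (Fin n))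
      (xstar : EuclideanSpace ℝ (Fin p) → EuclideanSpace ℝ (Fin n))
      (ystar : EuclideanSpace ℝ (Fin p)),
      -- (i) unique primal solution
      (Matrix.toEuclideanLin A xopt = 0 ∧
        (∀ x, Matrix.toEuclideanLin A x = 0 → f xopt ≤ f x) ∧
        (∀ x', Matrix.toEuclideanLin A x' = 0 →
          (∀ x, Matrix.toEuclideanLin A x = 0 → f x' ≤ f x) → x' = xopt)) ∧
      -- the dual function is well defined: the inner maximum is attained at `xstar y`
      (∀ y, IsMaxOn (fun x => ⟪Matrix.toEuclideanLin Aᵀ y, x⟫ - f x) Set.univ (xstar y)) ∧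
      -- (ii) the dual function attains its minimum at `ystar`
      (∀ y, (⟪Matrix.toEuclideanLin Aᵀ ystar, xstar ystar⟫ - f (xstar ystar))
        ≤ ⟪Matrix.toEuclideanLin Aᵀ y, xstar y⟫ - f (xstar y)) ∧
      -- (iii) no duality gap: `min_y φ(y) = -f*`
      (⟪Matrix.toEuclideanLin Aᵀ ystar, xstar ystar⟫ - f (xstar ystar) = -f xopt) ∧
      -- (iv) `x* = x*(Aᵀ y*)`
      xopt = xstar ystar := by
  set T := toEuclideanLin A
  have hTadj : toEuclideanLin Aᵀ = T.adjoint := by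
    rw [← conjTranspose_eq_transpose_of_trivial, toEuclideanLin_conjTranspose_eq_adjoint]
  have hdual_feas : ∀ y x, T x = 0 → ⟪toEuclideanLin Aᵀ y, x⟫ = 0 := fun y x hx => by
    rw [hTadj, LinearMap.adjoint_inner_left, hx, inner_zero_right]
  obtain ⟨xopt, hxoptK, hxopt⟩ := hsc.exists_isMinOn hμ hcont
    (LinearMap.ker T).closed_of_finiteDimensional ⟨0, (LinearMap.ker T).zero_mem⟩
  choose xstar hxstar using fun y => hsc.exists_isMaxOn_inner_sub hμ hcont (toEuclideanLin Aᵀ y)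
  obtain ⟨g, hgK, hg⟩ :=
    (hsc.convexOn fun _ => by positivity).exists_mem_orthogonal_subgradient hcont hxoptK hxopt
  obtain ⟨ystar, hystar⟩ : g ∈ LinearMap.range (toEuclideanLin Aᵀ) := by
    rwa [hTadj, ← LinearMap.orthogonal_ker]
  -- `g` is a subgradient vanishing at `xopt`, so `xopt` also solves the inner problem at `ystar`
  have hxopt_max : IsMaxOn (fun x => ⟪toEuclideanLin Aᵀ ystar, x⟫ - f x) univ xopt :=
    isMaxOn_iff.2 fun x _ => by
      rw [hdual_feas ystar xopt hxoptK, hystar]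
      linarith [hg x]
  have hxeq : xopt = xstar ystar :=
    (((innerₛₗ ℝ _).concaveOn convex_univ).sub_strictConvexOn
      (hsc.strictConvexOn hμ)).eq_of_isMaxOn hxopt_max (hxstar ystar) (mem_univ _) (mem_univ _)
  have hgap : ⟪toEuclideanLin Aᵀ ystar, xstar ystar⟫ - f (xstar ystar) = -f xopt := by
    rw [← hxeq, hdual_feas ystar xopt hxoptK, zero_sub]
  refine ⟨xopt, xstar, ystar, ⟨hxoptK, fun x hx => hxopt hx, fun x' hx' hmin' => ?_⟩,
    hxstar, fun y => ?_, hgap, hxeq⟩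
  · exact ((hsc.strictConvexOn hμ).subset (subset_univ _) (LinearMap.ker T).convex).eq_of_isMinOn
      (fun x hx => hmin' x hx) hxopt hx' hxoptK
  · have : ⟪toEuclideanLin Aᵀ y, xopt⟫ - f xopt ≤ _ := hxstar y (mem_univ xopt)
    rw [hgap]
    linarith [hdual_feas y xopt hxoptK]

/-- Strong duality for `min_{Ax=0} f(x)` with `f` continuous and `μ`-strongly convex:
the primal problem has a unique solution `x*`, the dual function
`φ(y) = max_x {⟨Aᵀy, x⟩ - f(x)}` attains its minimum at some `y*`, there is no duality gap
(`min φ = -f*`), and `x* = x*(Aᵀy*)`. -/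
theorem strong_duality_strongly_convex
    {n p : ℕ} (f : EuclideanSpace ℝ (Fin n) → ℝ) (μ : ℝ) (hμ : 0 < μ)
    (hcont : Continuous f) (hsc : StrongConvexOn Set.univ μ f)
    (A : Matrix (Fin p) (Fin n) ℝ)
    (hfeas : ∃ x, Matrix.toEuclideanLin A x = 0) :
    ∃ (xopt : EuclideanSpace ℝ (Fin n))
      (xstar : EuclideanSpace ℝ (Fin p) → EuclideanSpace ℝ (Fin n))
      (ystar : EuclideanSpace ℝ (Fin p)),
      -- (i) unique primal solution
      (Matrix.toEuclideanLin A xopt = 0 ∧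
        (∀ x, Matrix.toEuclideanLin A x = 0 → f xopt ≤ f x) ∧
        (∀ x', Matrix.toEuclideanLin A x' = 0 →
          (∀ x, Matrix.toEuclideanLin A x = 0 → f x' ≤ f x) → x' = xopt)) ∧
      -- the dual function is well defined: the inner maximum is attained at `xstar y`
      (∀ y, IsMaxOn (fun x => ⟪Matrix.toEuclideanLin Aᵀ y, x⟫ - f x) Set.univ (xstar y)) ∧
      -- (ii) the dual function attains its minimum at `ystar`
      (∀ y, (⟪Matrix.toEuclideanLin Aᵀ ystar, xstar ystar⟫ - f (xstar ystar))
        ≤ ⟪Matrix.toEuclideanLin Aᵀ y, xstar y⟫ - f (xstar y)) ∧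
      -- (iii) no duality gap: `min_y φ(y) = -f*`
      (⟪Matrix.toEuclideanLin Aᵀ ystar, xstar ystar⟫ - f (xstar ystar) = -f xopt) ∧
      -- (iv) `x* = x*(Aᵀ y*)`
      xopt = xstar ystar :=
  strong_duality_strongly_convex_general f μ hμ hcont hsc A
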